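/- arXiv:2105.12369 — 3 statements merged into one kernel-verified Lean document; each statement's English description precedes it below -/
import Mathlib

section
/- Let G = C \ltimes N with N normal and C finite cyclic, and let \pi be an irreducible representation of N with stabilizer C_\pi \le C under the conjugation action of C on \hat{N}. Then \pi extends to a representation of C_\pi \ltimes N; i.e., there is a representation \tilde{\pi} of C_\pi \ltimes N whose restriction to N equals \pi. -/
/-!
Let `g` generate the cyclic group `Cπ`, let `m = |Cπ|`, and let `e` be an intertwiner of `π` with
`π ∘ φ g`. Then `e ^ m` intertwines `π` with `π ∘ φ (g ^ m) = π`, so by Schur's lemma it is a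
scalar `c`, nonzero because `e` is invertible. Replacing `e` by `μ • e` with `μ ^ m = c⁻¹` gives
`e ^ m = 1`, so `g ^ i ↦ e ^ i` is a homomorphism `Cπ → End V`, and conjugation by `e ^ i`
implements `φ (g ^ i)` on `π`; together with `π` it defines a representation of `N ⋊ Cπ`.
-/

open CategoryTheory Representation

namespace Representation

variable {k N C V : Type*} [CommSemiring k] [Group N] [AddCommMonoid V] [Module k V]

def intertwiningSubmonoid [Monoid C] (ρ : Representation k N V) (φ : C →* MulAut N) :
    Submonoid (C × Module.End k V) where
  carrier := {p | ∀ n, p.2 * ρ n = ρ (φ p.1 n) * p.2}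
  one_mem' n := by simp
  mul_mem' {p q} hp hq n := by
    simp only [Prod.fst_mul, Prod.snd_mul, map_mul, MulAut.mul_apply]
    rw [mul_assoc, hq n, ← mul_assoc, hp, mul_assoc]

variable {ρ : Representation k N V}

theorem smul_mem_intertwiningSubmonoid [Monoid C] {φ : C →* MulAut N} {p : C × Module.End k V}
    (hp : p ∈ ρ.intertwiningSubmonoid φ) (μ : k) : (p.1, μ • p.2) ∈ ρ.intertwiningSubmonoid φ :=
  fun n => by rw [smul_mul_assoc, hp n, mul_smul_comm]

theorem mem_intertwiningSubmonoid_of_generator [Group C] [Finite C] {φ : C →* MulAut N} {g : C}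
    (hg : ∀ x, x ∈ Subgroup.zpowers g) {σ : C →* Module.End k V}
    (h : (g, σ g) ∈ ρ.intertwiningSubmonoid φ) (x : C) :
    (x, σ x) ∈ ρ.intertwiningSubmonoid φ :=
  Submonoid.powers_le.mpr (show g ∈ (ρ.intertwiningSubmonoid φ).comap ((MonoidHom.id C).prod σ)
    from h) (mem_powers_iff_mem_zpowers.mpr (hg x))

variable [Group C] {φ : C →* MulAut N}

variable (ρ) in
def semidirectProductLift (σ : C →* Module.End k V)
    (hσ : ∀ c, (c, σ c) ∈ ρ.intertwiningSubmonoid φ) : Representation k (N ⋊[φ] C) V :=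
  (Units.coeHom _).comp <| SemidirectProduct.lift (MonoidHom.toHomUnits ρ) σ.toHomUnits
    fun c => MonoidHom.ext fun n => Units.ext <| by
      simp only [MonoidHom.coe_comp, Function.comp_apply, MulEquiv.coe_toMonoidHom,
        MulAut.conj_apply, Units.val_mul, MonoidHom.coe_toHomUnits]
      rw [show σ c * ρ n = ρ (φ c n) * σ c from hσ c n, mul_assoc, ← σ.coe_toHomUnits,
        Units.mul_inv, mul_one]

@[simp]
theorem semidirectProductLift_inl (σ : C →* Module.End k V)
    (hσ : ∀ c, (c, σ c) ∈ ρ.intertwiningSubmonoid φ) (n : N) :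
    ρ.semidirectProductLift σ hσ (SemidirectProduct.inl n) = ρ n := by
  simp [semidirectProductLift]

end Representation

theorem exists_monoidHom_apply_eq_of_pow_card_eq_one {G M : Type*} [Group G] [Finite G] [Monoid M]
    {g : G} (hg : ∀ x, x ∈ Subgroup.zpowers g) {u : M} (hu : u ^ Nat.card G = 1) :
    ∃ σ : G →* M, σ g = u := by
  let v := (IsUnit.of_pow_eq_one hu Nat.card_pos.ne').unit
  have hv : zmultiplesHom (Additive Mˣ) (Additive.ofMul v) (Nat.card G) = 0 := by
    simp only [zmultiplesHom_apply, natCast_zsmul, ← ofMul_pow]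
    exact congrArg Additive.ofMul (Units.ext (by simpa [v] using hu))
  refine ⟨(Units.coeHom M).comp <| (AddMonoidHom.toMultiplicativeLeft (ZMod.lift _ ⟨_, hv⟩)).comp
    (zmodMulEquivOfGenerator hg rfl).symm.toMonoidHom, ?_⟩
  have h1 : ZMod.lift _ ⟨_, hv⟩ (1 : ℤ) = Additive.ofMul v := by rw [ZMod.lift_coe]; simp
  simpa [AddMonoidHom.coe_toMultiplicativeLeft, v] using congrArg (fun a => (a.toMul : M)) h1

theorem IsUnit.exists_smul_pow_eq_one {k A : Type*} [Field k] [IsAlgClosed k] [Semiring A]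
    [Algebra k A] {a : A} (ha : IsUnit a) {m : ℕ} (hm : m ≠ 0) {c : k}
    (hc : a ^ m = algebraMap k A c) :
    ∃ μ : k, (μ • a) ^ m = 1 := by
  nontriviality A
  have hc0 : c ≠ 0 := by
    rintro rfl
    exact not_isUnit_zero (map_zero (algebraMap k A) ▸ hc ▸ ha.pow m)
  obtain ⟨μ, hμ⟩ := IsAlgClosed.exists_pow_nat_eq c⁻¹ (Nat.pos_of_ne_zero hm)
  refine ⟨μ, ?_⟩
  rw [smul_pow, hc, hμ, Algebra.smul_def, ← map_mul, inv_mul_cancel₀ hc0, map_one]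

theorem FDRep.exists_algebraMap_eq_of_commute {k G : Type*} [Field k] [IsAlgClosed k] [Monoid G]
    (π : FDRep k G) [Simple π] (f : Module.End k π.V) (hf : ∀ g, Commute f (π.ρ g)) :
    ∃ c : k, algebraMap k _ c = f := by
  let F : π ⟶ π := ⟨FGModuleCat.ofHom f, fun g => FGModuleCat.hom_ext (hf g).eq⟩
  obtain ⟨c, hc⟩ := endomorphism_simple_eq_smul_id k F
  exact ⟨c, by rw [Algebra.algebraMap_eq_smul_one]; exact congrArg (·.hom.hom.hom) hc⟩

theorem extension_to_stabilizer_general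
    {N C : Type} [Group N] [Group C] [Finite C] [IsCyclic C]
    (φ : C →* MulAut N)
    (π : FDRep ℂ N) (hπ : Simple π)
    (Cπ : Subgroup C)
    (hCπ : ∀ c : C, c ∈ Cπ ↔
      ∃ e : π.V ≃ₗ[ℂ] π.V, ∀ n : N,
        (e : π.V →ₗ[ℂ] π.V) ∘ₗ π.ρ n = π.ρ (φ c n) ∘ₗ (e : π.V →ₗ[ℂ] π.V)) :
    ∃ ρ : Representation ℂ (N ⋊[φ.comp Cπ.subtype] Cπ) π.V,
      ∀ n : N, ρ (SemidirectProduct.inl n) = π.ρ n := by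
  obtain ⟨g, hg⟩ := IsCyclic.exists_generator (α := Cπ)
  obtain ⟨e, he⟩ := (hCπ g).mp g.2
  have he_mem : (g, (e : Module.End ℂ π.V)) ∈ intertwiningSubmonoid π.ρ (φ.comp Cπ.subtype) := he
  have he_pow_mem : ((1 : Cπ), (e : Module.End ℂ π.V) ^ Nat.card Cπ) ∈
      intertwiningSubmonoid π.ρ (φ.comp Cπ.subtype) := by
    simpa [pow_card_eq_one'] using pow_mem he_mem (Nat.card Cπ)
  obtain ⟨c, hc⟩ := π.exists_algebraMap_eq_of_commute _ fun n => by
    simpa [commute_iff_eq] using he_pow_mem n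
  obtain ⟨μ, hμ⟩ := ((Module.End.isUnit_iff _).mpr e.bijective).exists_smul_pow_eq_one
    Nat.card_pos.ne' hc.symm
  obtain ⟨σ, hσ⟩ := exists_monoidHom_apply_eq_of_pow_card_eq_one hg hμ
  have hσ_mem := mem_intertwiningSubmonoid_of_generator hg
    (hσ ▸ smul_mem_intertwiningSubmonoid he_mem μ)
  exact ⟨semidirectProductLift π.ρ σ hσ_mem, semidirectProductLift_inl σ hσ_mem⟩

/-- Let `G = N ⋊ C` with `N` normal and `C` finite cyclic, and let `π` be an
irreducible representation of `N` with stabilizer `Cπ ≤ C` under the conjugation action of `C`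
on the irreducible representations of `N`. Then `π` extends to a representation of
`N ⋊ Cπ`: there is a representation of `N ⋊[φ|_{Cπ}] Cπ` on the space of `π` whose
restriction along `N → N ⋊ Cπ` equals `π`. -/
theorem extension_to_stabilizer
    {N C : Type} [Group N] [Group C] [Finite N] [Finite C] [IsCyclic C]
    (φ : C →* MulAut N)
    (π : FDRep ℂ N) (hπ : Simple π)
    (Cπ : Subgroup C)
    (hCπ : ∀ c : C, c ∈ Cπ ↔
      ∃ e : π.V ≃ₗ[ℂ] π.V, ∀ n : N,
        (e : π.V →ₗ[ℂ] π.V) ∘ₗ π.ρ n = π.ρ (φ c n) ∘ₗ (e : π.V →ₗ[ℂ] π.V)) :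
    ∃ ρ : Representation ℂ (N ⋊[φ.comp Cπ.subtype] Cπ) π.V,
      ∀ n : N, ρ (SemidirectProduct.inl n) = π.ρ n :=
  extension_to_stabilizer_general φ π hπ Cπ hCπ
end

section
/- Let G = C \ltimes N with N normal and C cyclic, and let \rho be an irreducible representation of G. Then \rho|_N is irreducible if and only if \rho is not isomorphic to \rho \otimes \chi for any nontrivial one-dimensional character \chi of G that is trivial on N (equivalently, character of C). -/
/-!
Orthogonality of the characters of the abelian group `C` turns `∑_{ψ ∈ Ĉ} ⟨ρ, ρ ⊗ ψ⟩_G` into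
`⟨ρ|_N, ρ|_N⟩_N`. Every twist `ρ ⊗ ψ` is again irreducible, so by Schur each summand is `0` or `1`,
and the summand at `ψ = 1` is `1`. Hence `ρ|_N` has character norm `1`, i.e. is irreducible,
exactly when no nontrivial twist of `ρ` is isomorphic to `ρ`.
-/

open CategoryTheory

theorem MonoidHom.sum_apply_eq_ite {k C : Type*} [Field k] [CommGroup C] [Finite C]
    [HasEnoughRootsOfUnity k (Monoid.exponent C)] [Fintype (C →* kˣ)] [DecidableEq C] (c : C) :
    ∑ ψ : C →* kˣ, (ψ c : k) = if c = 1 then (Nat.card C : k) else 0 := by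
  split_ifs with hc
  · simp [hc, ← Nat.card_eq_fintype_card, CommGroup.card_monoidHom_of_hasEnoughRootsOfUnity]
  · obtain ⟨ψ₀, hψ₀⟩ := CommGroup.exists_apply_ne_one_of_hasEnoughRootsOfUnity C k hc
    have hshift : (ψ₀ c : k) * ∑ ψ : C →* kˣ, (ψ c : k) = ∑ ψ : C →* kˣ, (ψ c : k) := by
      rw [Finset.mul_sum]
      exact Fintype.sum_equiv (Equiv.mulLeft ψ₀) _ _ fun ψ => by simp
    have hψ₀' : (ψ₀ c : k) ≠ 1 := by simpa [Units.val_eq_one] using hψ₀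
    by_contra hsum
    exact hψ₀' ((mul_eq_right₀ hsum).1 hshift)

namespace FDRep

universe u

variable {k G : Type u} [Field k] [Group G]

noncomputable def twist (V : FDRep k G) (χ : G →* kˣ) : FDRep k G :=
  FDRep.of (V := V)
    { toFun g := (χ g : k) • V.ρ g
      map_one' := by simp
      map_mul' g h := by
        ext x
        simp [smul_smul, mul_comm] }

@[simp]
theorem twist_ρ (V : FDRep k G) (χ : G →* kˣ) (g : G) : (V.twist χ).ρ g = (χ g : k) • V.ρ g :=
  rfl

theorem char_twist (V : FDRep k G) (χ : G →* kˣ) (g : G) :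
    (V.twist χ).character g = χ g * V.character g :=
  map_smul (LinearMap.trace k V) _ (V.ρ g)

instance [IsAlgClosed k] [CharZero k] [Fintype G] (V : FDRep k G) [hV : Simple V] (χ : G →* kˣ) :
    Simple (V.twist χ) := by
  rw [simple_iff_char_is_norm_one] at hV ⊢
  simpa [char_twist, mul_mul_mul_comm _ (V.character _), ← Units.val_mul, ← map_mul] using hV

theorem nonempty_iso_twist_iff (V : FDRep k G) (χ : G →* kˣ) :
    Nonempty (V ≅ V.twist χ) ↔ ∃ e : V.V ≃ₗ[k] V.V, ∀ g : G,
      (e : V.V →ₗ[k] V.V) ∘ₗ V.ρ g = ((χ g : k) • V.ρ g) ∘ₗ (e : V.V →ₗ[k] V.V) := by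
  constructor
  · rintro ⟨i⟩
    refine ⟨(isoToLinearEquiv i : V ≃ₗ[k] V.twist χ), fun g => ?_⟩
    ext x
    exact congr($(i.hom.comm g).hom x)
  · rintro ⟨e, he⟩
    refine ⟨Action.mkIso e.toFGModuleCatIso fun g => ?_⟩
    ext x
    exact LinearMap.congr_fun (he g) x

theorem nonempty_iso_twist_one (V : FDRep k G) : Nonempty (V ≅ V.twist 1) :=
  (nonempty_iso_twist_iff V 1).2 ⟨LinearEquiv.refl k V, fun g => by simp⟩

theorem char_of_comp {H : Type u} [Group H] (V : FDRep k G) (f : H →* G) (h : H) :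
    (FDRep.of (V.ρ.comp f)).character h = V.character (f h) :=
  rfl

end FDRep

namespace SemidirectProduct

open FDRep

instance {N C : Type*} [Group N] [Group C] {φ : C →* MulAut N} [Finite N] [Finite C] :
    Finite (N ⋊[φ] C) :=
  Finite.of_equiv _ equivProd.symm

theorem sum_ite_rightHom_eq_one {N C M : Type*} [Group N] [Group C] {φ : C →* MulAut N}
    [Fintype N] [Fintype C] [Fintype (N ⋊[φ] C)] [DecidableEq C] [AddCommMonoid M]
    (f : N ⋊[φ] C → M) :
    ∑ g, (if rightHom g = 1 then f g else 0) = ∑ n, f (inl n) := by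
  rw [← Fintype.sum_equiv equivProd.symm (fun p => if p.2 = 1 then f ⟨p.1, p.2⟩ else 0) _
    fun _ => rfl, Fintype.sum_prod_type]
  simp [Finset.sum_ite_eq']

variable {N C : Type} [Group N] [CommGroup C] {φ : C →* MulAut N}
  [Fintype N] [Fintype C] [Fintype (N ⋊[φ] C)] [Fintype (C →* ℂˣ)]

theorem card_twists_mul_card_eq_sum_char (ρ : FDRep ℂ (N ⋊[φ] C)) [Simple ρ] :
    (Nat.card {ψ : C →* ℂˣ // Nonempty (ρ ≅ ρ.twist (ψ.comp rightHom))} : ℂ) * Nat.card N =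
      ∑ n : N, ρ.character (inl n) * ρ.character (inl n)⁻¹ := by
  classical
  let : Invertible (Nat.card (N ⋊[φ] C) : ℂ) := invertibleOfNonzero (NeZero.ne _)
  set f : N ⋊[φ] C → ℂ := fun g => ρ.character g * ρ.character g⁻¹
  have horth (ψ : C →* ℂˣ) :
      (Nat.card (N ⋊[φ] C) : ℂ) * (if Nonempty (ρ ≅ ρ.twist (ψ.comp rightHom)) then 1 else 0) =
        ∑ g, f g * ψ (rightHom g⁻¹) := by
    rw [← char_orthonormal, mul_inv_cancel_left₀ (NeZero.ne _)]
    simp only [char_twist, f]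
    exact Finset.sum_congr rfl fun g _ => by simp only [MonoidHom.comp_apply]; ring
  have hsum (g : N ⋊[φ] C) : ∑ ψ : C →* ℂˣ, (ψ (rightHom g⁻¹) : ℂ) =
      if rightHom g = 1 then (Nat.card C : ℂ) else 0 := by
    rw [MonoidHom.sum_apply_eq_ite, map_inv, inv_eq_one]
  refine mul_left_cancel₀ (NeZero.ne (Nat.card C : ℂ)) ?_
  calc (Nat.card C : ℂ) *
        (Nat.card {ψ : C →* ℂˣ // Nonempty (ρ ≅ ρ.twist (ψ.comp rightHom))} * Nat.card N)
      = ∑ ψ : C →* ℂˣ, (Nat.card (N ⋊[φ] C) : ℂ) *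
          (if Nonempty (ρ ≅ ρ.twist (ψ.comp rightHom)) then 1 else 0) := by
        rw [← Finset.mul_sum, ← Finset.natCast_card_filter, ← Fintype.card_subtype,
          ← Nat.card_eq_fintype_card, card]
        push_cast
        ring
    _ = ∑ g, f g * ∑ ψ : C →* ℂˣ, (ψ (rightHom g⁻¹) : ℂ) := by
        simp only [horth, Finset.mul_sum]
        exact Finset.sum_comm
    _ = (Nat.card C : ℂ) * ∑ g, (if rightHom g = 1 then f g else 0) := by
        simp only [hsum, Finset.mul_sum]
        refine Finset.sum_congr rfl fun g _ => ?_
        split_ifs <;> ring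
    _ = (Nat.card C : ℂ) * ∑ n : N, ρ.character (inl n) * ρ.character (inl n)⁻¹ := by
        rw [sum_ite_rightHom_eq_one]

theorem simple_comp_inl_iff (ρ : FDRep ℂ (N ⋊[φ] C)) [Simple ρ] :
    Simple (FDRep.of (ρ.ρ.comp (inl : N →* N ⋊[φ] C))) ↔
      ∀ ψ : C →* ℂˣ, Nonempty (ρ ≅ ρ.twist (ψ.comp rightHom)) → ψ = 1 := by
  have hone : Nonempty (ρ ≅ ρ.twist ((1 : C →* ℂˣ).comp rightHom)) := by
    simpa using nonempty_iso_twist_one ρ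
  simp only [simple_iff_char_is_norm_one, char_of_comp, map_inv]
  rw [← card_twists_mul_card_eq_sum_char, mul_eq_right₀ (NeZero.ne _), Nat.cast_eq_one,
    Nat.card_eq_one_iff_exists]
  constructor
  · rintro ⟨ψ₀, hψ₀⟩ ψ hψ
    exact congrArg Subtype.val ((hψ₀ ⟨ψ, hψ⟩).trans (hψ₀ ⟨1, hone⟩).symm)
  · exact fun h => ⟨⟨1, hone⟩, fun ψ => Subtype.ext (h ψ ψ.2)⟩

end SemidirectProduct

open SemidirectProduct FDRep

/-- Let `G = N ⋊ C` with `N` normal and `C` cyclic, and `ρ` an irreducible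
representation of `G`. Then `ρ|_N` is irreducible if and only if `ρ` is not isomorphic to
`ρ ⊗ χ` for any nontrivial one-dimensional character `χ` of `G` trivial on `N`. -/
theorem restriction_irreducible_iff_no_twist
    {N C : Type} [Group N] [Group C] [Finite N] [Finite C] [IsCyclic C]
    (φ : C →* MulAut N)
    (ρ : FDRep ℂ (N ⋊[φ] C)) (hρ : Simple ρ) :
    Simple (FDRep.of (ρ.ρ.comp (SemidirectProduct.inl : N →* N ⋊[φ] C))) ↔
      ∀ χ : (N ⋊[φ] C) →* ℂˣ, (∀ n : N, χ (SemidirectProduct.inl n) = 1) → χ ≠ 1 →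
        ¬ ∃ e : ρ.V ≃ₗ[ℂ] ρ.V, ∀ g : N ⋊[φ] C,
            (e : ρ.V →ₗ[ℂ] ρ.V) ∘ₗ ρ.ρ g = ((χ g : ℂ) • ρ.ρ g) ∘ₗ (e : ρ.V →ₗ[ℂ] ρ.V) := by
  let _ : CommGroup C := IsCyclic.commGroup
  have := Fintype.ofFinite N
  have := Fintype.ofFinite C
  have := Fintype.ofFinite (N ⋊[φ] C)
  have := Fintype.ofFinite (C →* ℂˣ)
  rw [simple_comp_inl_iff]
  simp only [← nonempty_iso_twist_iff]
  constructor
  · rintro h χ hχN hχ1 hiso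
    have hχ : χ = (χ.comp inr).comp rightHom := hom_ext (by ext n; simp [hχN]) (by ext c; simp)
    rw [hχ] at hiso hχ1
    exact hχ1 (by rw [h _ hiso, MonoidHom.one_comp])
  · intro h ψ hψ
    by_contra hψ1
    refine h (ψ.comp rightHom) (by simp) (fun h1 => hψ1 ?_) hψ
    rwa [← MonoidHom.one_comp rightHom, MonoidHom.cancel_right rightHom_surjective] at h1
end

section
/- Let n \ge 3 and let g \in SL_n(F_q) be an element whose centralizer in GL_n(F_q) maps onto F_q^* under the determinant map. If \rho is an irreducible representation of GL_n(F_q) and \pi an irreducible constituent of \rho|_{SL_n(F_q)}, then \chi_\rho(g)/\dim(\rho) = \chi_\pi(g)/\dim(\pi). -/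
/-! The class sum `z = ∑_{t ∈ H} ρ(t g t⁻¹)` commutes with `ρ(H)`, so by Schur's lemma it is a
scalar `λ` on an irreducible `H`-representation, and taking traces gives
`λ · dim = |H| · χ(g)`. If every `y ∈ G` satisfies `y ι(H) c⁻¹ ⊆ ι(H)` for some `c` centralising
`ι g`, then conjugation by `y` only permutes the terms of the class sum of `ι g`, which is
therefore a scalar on an irreducible `G`-representation too. A nonzero intertwiner from the
`H`-representation to the restricted `G`-representation forces the two scalars to agree.
For `SL_n ⊆ GL_n`, the condition holds by taking `c` in the centraliser with `det c = det y`. -/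

open CategoryTheory

def intertwiners {k G V W : Type*} [CommRing k] [Monoid G]
    [AddCommGroup V] [Module k V] [AddCommGroup W] [Module k W]
    (ρ₁ : Representation k G V) (ρ₂ : Representation k G W) :
    Submodule k (V →ₗ[k] W) where
  carrier := {T | ∀ g : G, T ∘ₗ ρ₁ g = ρ₂ g ∘ₗ T}
  add_mem' := by
    intro T S hT hS g
    simp only [LinearMap.add_comp, LinearMap.comp_add, hT g, hS g]
  zero_mem' := by
    intro g
    simp
  smul_mem' := by
    intro c T hT g
    simp only [LinearMap.smul_comp, LinearMap.comp_smul, hT g]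

open Module

theorem Fintype.sum_conj_conj_eq_of_mul_mem_range {G H M : Type*} [Group G] [Group H] [Fintype H]
    [AddCommMonoid M] {ι : H →* G} (hι : Function.Injective ι) (g : H) (f : G → M) {y c : G}
    (hc : Commute c (ι g)) (hyc : ∀ t, y * ι t * c⁻¹ ∈ ι.range) :
    ∑ t : H, f (y * ι (t * g * t⁻¹) * y⁻¹) = ∑ t : H, f (ι (t * g * t⁻¹)) := by
  choose s hs using fun t => MonoidHom.mem_range.mp (hyc t)
  have hs_bij : Function.Bijective s := Finite.injective_iff_bijective.mp fun t t' h => by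
    have hst := (hs t).symm.trans ((congrArg ι h).trans (hs t'))
    exact hι (by simpa using hst)
  have hconj : ∀ t, y * ι (t * g * t⁻¹) * y⁻¹ = ι (s t * g * (s t)⁻¹) := fun t => by
    have hcg : c⁻¹ * ι g * c = ι g := by rw [mul_assoc, ← hc.eq, inv_mul_cancel_left]
    simp only [map_mul, map_inv, hs]
    conv_lhs => rw [← hcg]
    group
  simp only [hconj]
  exact hs_bij.sum_comp fun u => f (ι (u * g * u⁻¹))

namespace Representation

variable {k G V W : Type*} [Field k] [Group G] [AddCommGroup V] [Module k V]
  [AddCommGroup W] [Module k W]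

def classSum [Fintype G] (ρ : Representation k G V) (g : G) : Module.End k V :=
  ∑ t : G, ρ (t * g * t⁻¹)

theorem commute_classSum_of_mul_mem_range {H : Type*} [Group H] [Fintype H]
    (ρ : Representation k G V) {ι : H →* G} (hι : Function.Injective ι) (g : H) {y c : G}
    (hc : Commute c (ι g)) (hyc : ∀ t, y * ι t * c⁻¹ ∈ ι.range) :
    Commute (ρ y) (classSum (ρ.comp ι) g) := by
  have hsum := Fintype.sum_conj_conj_eq_of_mul_mem_range hι g (fun x => ρ x) hc hyc
  simp only [Commute, SemiconjBy, classSum, MonoidHom.comp_apply]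
  conv_rhs => rw [← hsum]
  rw [Finset.mul_sum, Finset.sum_mul]
  refine Finset.sum_congr rfl fun t _ => ?_
  rw [← map_mul, ← map_mul, inv_mul_cancel_right]

theorem commute_classSum [Fintype G] (ρ : Representation k G V) (g x : G) :
    Commute (ρ x) (classSum ρ g) :=
  commute_classSum_of_mul_mem_range ρ (ι := MonoidHom.id G) Function.injective_id g
    (Commute.one_left g) fun t => ⟨x * t, by simp⟩

theorem comp_classSum_of_comp_eq [Fintype G] (ρ : Representation k G V)
    (σ : Representation k G W) {T : V →ₗ[k] W} (hT : ∀ x, T ∘ₗ ρ x = σ x ∘ₗ T) (g : G) :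
    T ∘ₗ classSum ρ g = classSum σ g ∘ₗ T := by
  ext v
  simp only [classSum, LinearMap.comp_apply, LinearMap.sum_apply, map_sum]
  exact Finset.sum_congr rfl fun t _ => LinearMap.congr_fun (hT _) v

theorem trace_classSum [Fintype G] (ρ : Representation k G V) (g : G) :
    LinearMap.trace k V (classSum ρ g) = Fintype.card G * ρ.character g := by
  rw [classSum, map_sum]
  change ∑ t, ρ.character (t * g * t⁻¹) = _
  simp

theorem mul_finrank_eq_of_classSum_eq_smul_id [Fintype G] [FiniteDimensional k V]
    (ρ : Representation k G V) {g : G} {c : k} (hc : classSum ρ g = c • LinearMap.id) :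
    c * finrank k V = Fintype.card G * ρ.character g := by
  rw [← trace_classSum, hc, map_smul, LinearMap.trace_id, smul_eq_mul]

end Representation

namespace FDRep

variable {k : Type*} [Field k]

theorem finrank_pos_of_simple {G : Type*} [Monoid G] (X : FDRep k G) [Simple X] :
    0 < finrank k X := by
  refine Nat.pos_of_ne_zero fun h => id_nonzero X ?_
  have : Subsingleton X := finrank_zero_iff.mp h
  ext v
  exact Subsingleton.elim _ _

theorem exists_eq_smul_id_of_commute [IsAlgClosed k] {G : Type*} [Monoid G] (X : FDRep k G)
    [Simple X] {T : Module.End k X} (hT : ∀ g, Commute (X.ρ g) T) :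
    ∃ c : k, T = c • LinearMap.id := by
  let f : X ⟶ X := ⟨FGModuleCat.ofHom T, fun g => by
    ext v
    exact LinearMap.congr_fun (hT g).symm.eq v⟩
  obtain ⟨c, hc⟩ := endomorphism_simple_eq_smul_id k f
  have hc' := congrArg Action.Hom.hom hc
  rw [Action.smul_hom] at hc'
  exact ⟨c, congrArg (fun φ => φ.hom.hom) hc'.symm⟩

theorem character_div_finrank_eq_of_intertwining [IsAlgClosed k] [CharZero k] {G H : Type*}
    [Group G] [Group H] [Fintype H] {ι : H →* G} (hι : Function.Injective ι) {g : H}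
    (hcent : ∀ y : G, ∃ c, Commute c (ι g) ∧ ∀ t, y * ι t * c⁻¹ ∈ ι.range)
    (X : FDRep k G) [Simple X] (Y : FDRep k H) [Simple Y] {T : Y →ₗ[k] X} (hT0 : T ≠ 0)
    (hT : ∀ x, T ∘ₗ Y.ρ x = X.ρ (ι x) ∘ₗ T) :
    X.character (ι g) / finrank k X = Y.character g / finrank k Y := by
  obtain ⟨cY, hcY⟩ := Y.exists_eq_smul_id_of_commute (Representation.commute_classSum Y.ρ g)
  obtain ⟨cX, hcX⟩ := X.exists_eq_smul_id_of_commute fun y => by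
    obtain ⟨c, hc, hyc⟩ := hcent y
    exact Representation.commute_classSum_of_mul_mem_range X.ρ hι g hc hyc
  have hTc := Representation.comp_classSum_of_comp_eq Y.ρ (X.ρ.comp ι) hT g
  rw [hcY, hcX, LinearMap.comp_smul, LinearMap.smul_comp, LinearMap.comp_id,
    LinearMap.id_comp] at hTc
  have hcXY : cY = cX := smul_left_injective k hT0 hTc
  have hX : cX * finrank k X = Fintype.card H * X.character (ι g) :=
    Representation.mul_finrank_eq_of_classSum_eq_smul_id (X.ρ.comp ι) hcX
  have hY : cY * finrank k Y = Fintype.card H * Y.character g :=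
    Representation.mul_finrank_eq_of_classSum_eq_smul_id Y.ρ hcY
  have hdX : (finrank k X : k) ≠ 0 := Nat.cast_ne_zero.mpr X.finrank_pos_of_simple.ne'
  have hdY : (finrank k Y : k) ≠ 0 := Nat.cast_ne_zero.mpr Y.finrank_pos_of_simple.ne'
  have hH : (Fintype.card H : k) ≠ 0 := Nat.cast_ne_zero.mpr Fintype.card_ne_zero
  rw [div_eq_div_iff hdX hdY]
  apply mul_left_cancel₀ hH
  linear_combination (finrank k X : k) * hY - (finrank k Y : k) * hX
    - (finrank k X * finrank k Y : k) * hcXY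

end FDRep

theorem Matrix.SpecialLinearGroup.mem_range_toGL_iff {n R : Type*} [Fintype n] [DecidableEq n]
    [CommRing R] {u : GL n R} : u ∈ toGL.range ↔ GeneralLinearGroup.det u = 1 := by
  rw [← SetLike.mem_coe, MonoidHom.coe_range, range_toGL, Set.mem_preimage, Set.mem_singleton_iff]

theorem character_ratio_GL_SL_general
    (F : Type) [Field F] [Fintype F] {n : ℕ}
    (g : Matrix.SpecialLinearGroup (Fin n) F)
    (hcent : ∀ a : Fˣ, ∃ h : GL (Fin n) F,
      h * Matrix.SpecialLinearGroup.toGL g = Matrix.SpecialLinearGroup.toGL g * h ∧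
      Matrix.GeneralLinearGroup.det h = a)
    (ρ : FDRep ℂ (GL (Fin n) F)) (hρ : Simple ρ)
    (π : FDRep ℂ (Matrix.SpecialLinearGroup (Fin n) F)) (hπ : Simple π)
    (hocc : intertwiners π.ρ (ρ.ρ.comp Matrix.SpecialLinearGroup.toGL) ≠ ⊥) :
    ρ.character (Matrix.SpecialLinearGroup.toGL g) / (Module.finrank ℂ ρ.V : ℂ)
      = π.character g / (Module.finrank ℂ π.V : ℂ) := by
  classical
  obtain ⟨T, hT, hT0⟩ := (Submodule.ne_bot_iff _).mp hocc
  refine FDRep.character_div_finrank_eq_of_intertwining Matrix.SpecialLinearGroup.toGL_injective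
    (fun y => ?_) ρ π hT0 hT
  obtain ⟨c, hc, hdet⟩ := hcent (Matrix.GeneralLinearGroup.det y)
  refine ⟨c, hc, fun t => Matrix.SpecialLinearGroup.mem_range_toGL_iff.mpr ?_⟩
  simp [hdet]

/-- Let `n ≥ 3` and `g ∈ SL_n(F_q)` whose centralizer in `GL_n(F_q)` maps
onto `F_q^*` under the determinant. If `ρ` is an irreducible representation of `GL_n(F_q)`
and `π` an irreducible constituent of `ρ|_{SL_n}`, then the character ratios agree:
`χ_ρ(g)/dim ρ = χ_π(g)/dim π`. -/
theorem character_ratio_GL_SL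
    (F : Type) [Field F] [Fintype F] {n : ℕ} (hn : 3 ≤ n)
    (g : Matrix.SpecialLinearGroup (Fin n) F)
    (hcent : ∀ a : Fˣ, ∃ h : GL (Fin n) F,
      h * Matrix.SpecialLinearGroup.toGL g = Matrix.SpecialLinearGroup.toGL g * h ∧
      Matrix.GeneralLinearGroup.det h = a)
    (ρ : FDRep ℂ (GL (Fin n) F)) (hρ : Simple ρ)
    (π : FDRep ℂ (Matrix.SpecialLinearGroup (Fin n) F)) (hπ : Simple π)
    (hocc : intertwiners π.ρ (ρ.ρ.comp Matrix.SpecialLinearGroup.toGL) ≠ ⊥) :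
    ρ.character (Matrix.SpecialLinearGroup.toGL g) / (Module.finrank ℂ ρ.V : ℂ)
      = π.character g / (Module.finrank ℂ π.V : ℂ) :=
  character_ratio_GL_SL_general F g hcent ρ hρ π hπ hocc
end
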